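/- Let U be a vector space over ℂ (or any ℚ-algebra setting in which the relevant exponentials and binomial series converge formally), and let L(-1), L(0) be operators on U satisfying [L(0), L(-1)] = L(-1). Then as formal power series in x with operator coefficients, e^{x L(-1)} (1+x)^{L(0)} = (1+x)^{L(-1)+L(0)}, where (1+x)^A denotes the formal binomial series ∑_{j≥0} C(A, j) x^j with C(A,j) = A(A-1)⋯(A-j+1)/j!. -/

import Mathlib

/-!
Both sides are the solution with constant term `1` of `(1 + x) θF = x (L(-1) + L(0)) F`, where
`θ = x d/dx` is a derivation of the noncommutative ring of operator-valued series. For `(1 + x)^A`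
this is the coefficient recursion of `A(A-1)⋯(A-j+1)/j!`. For the product it follows from
`θ e^{xL(-1)} = x L(-1) e^{xL(-1)}` and `e^{xL(-1)} L(0) = (L(0) - x L(-1)) e^{xL(-1)}`, the latter
being `[L(0), L(-1)^n] = n L(-1)^n` on coefficients.
-/

noncomputable section

/-- Descending Pochhammer-type operator product `A(A-1)⋯(A-(j-1))` for an
endomorphism `A` of a complex vector space `U`. -/
def opDescPoch {U : Type*} [AddCommGroup U] [Module ℂ U] (A : Module.End ℂ U) :
    ℕ → Module.End ℂ U
  | 0 => 1
  | (j + 1) => opDescPoch A j * (A - (j : ℂ) • 1)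

/-- The formal binomial series `(1+x)^A = ∑_{j≥0} C(A, j) x^j` with
`C(A,j) = A(A-1)⋯(A-j+1)/j!`, as a power series with operator coefficients. -/
def opBinomSeries {U : Type*} [AddCommGroup U] [Module ℂ U] (A : Module.End ℂ U) :
    PowerSeries (Module.End ℂ U) :=
  PowerSeries.mk fun j => ((j.factorial : ℂ)⁻¹) • opDescPoch A j

/-- The formal exponential series `e^{xA} = ∑_{n≥0} x^n A^n / n!`. -/
def opExpSeries {U : Type*} [AddCommGroup U] [Module ℂ U] (A : Module.End ℂ U) :
    PowerSeries (Module.End ℂ U) :=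
  PowerSeries.mk fun n => ((n.factorial : ℂ)⁻¹) • A ^ n

open PowerSeries

namespace PowerSeries

variable {R : Type*}

section Semiring

variable [Semiring R]

/-- The Euler operator `θ = X · d/dX`; unlike `PowerSeries.derivative` it needs no commutativity of
the coefficients. -/
def eulerOp : R⟦X⟧ →+ R⟦X⟧ where
  toFun F := mk fun n => n • coeff n F
  map_zero' := by ext; simp
  map_add' F G := by ext; simp

@[simp]
lemma coeff_eulerOp (n : ℕ) (F : R⟦X⟧) : coeff n (eulerOp F) = n • coeff n F := by
  simp [eulerOp]

@[simp]
lemma constantCoeff_eulerOp (F : R⟦X⟧) : constantCoeff (eulerOp F) = 0 := by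
  rw [← coeff_zero_eq_constantCoeff_apply, coeff_eulerOp, zero_smul]

lemma eulerOp_mul (F G : R⟦X⟧) : eulerOp (F * G) = eulerOp F * G + F * eulerOp G := by
  ext n
  simp only [coeff_eulerOp, map_add, coeff_mul, Finset.smul_sum, ← Finset.sum_add_distrib]
  refine Finset.sum_congr rfl fun ⟨i, j⟩ hij => ?_
  rw [← Finset.HasAntidiagonal.mem_antidiagonal.mp hij, add_smul, smul_mul_assoc, mul_smul_comm]

end Semiring

/-- On coefficients the equation reads `(n + 1) • f (n + 1) + n • f n = A * f n`, so it determines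
`F` from its constant term. -/
lemma eq_of_one_add_X_mul_eulerOp_eq [Ring R] [IsAddTorsionFree R] {A : R} {F G : R⟦X⟧}
    (hF : (1 + X) * eulerOp F = X * C A * F) (hG : (1 + X) * eulerOp G = X * C A * G)
    (h0 : constantCoeff F = constantCoeff G) : F = G := by
  have hH : (1 + X) * eulerOp (F - G) = X * C A * (F - G) := by
    rw [map_sub, mul_sub, mul_sub, hF, hG]
  rw [← sub_eq_zero]
  ext n
  induction n with
  | zero => simpa [sub_eq_zero] using h0
  | succ n ih =>
    have hn := congr_arg (coeff (n + 1)) hH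
    simp only [add_mul, one_mul, map_add, mul_assoc, coeff_succ_X_mul, coeff_eulerOp,
      coeff_C_mul, ih, map_zero, smul_zero, mul_zero, add_zero] at hn
    exact IsAddTorsionFree.nsmul_right_injective n.succ_ne_zero (by simpa using hn)

end PowerSeries

lemma mul_pow_sub_pow_mul_eq_nsmul {R : Type*} [Ring R] {A B : R} (h : B * A - A * B = A)
    (n : ℕ) : B * A ^ n - A ^ n * B = n • A ^ n := by
  induction n with
  | zero => simp
  | succ n ih =>
    calc B * A ^ (n + 1) - A ^ (n + 1) * B
        = (B * A ^ n - A ^ n * B) * A + A ^ n * (B * A - A * B) := by noncomm_ring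
      _ = (n + 1) • A ^ (n + 1) := by rw [ih, h, smul_mul_assoc, ← pow_succ, succ_nsmul]

lemma succ_nsmul_inv_factorial_smul {K M : Type*} [Field K] [CharZero K] [AddCommGroup M]
    [Module K M] (n : ℕ) (x : M) :
    (n + 1) • ((n + 1).factorial : K)⁻¹ • x = (n.factorial : K)⁻¹ • x := by
  rw [← Nat.cast_smul_eq_nsmul K, smul_smul, Nat.factorial_succ, Nat.cast_mul, mul_inv,
    ← mul_assoc, mul_inv_cancel₀ (by exact_mod_cast n.succ_ne_zero), one_mul]

section Operators

variable {U : Type*} [AddCommGroup U] [Module ℂ U]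

lemma commute_opDescPoch (A : Module.End ℂ U) (n : ℕ) : Commute A (opDescPoch A n) := by
  induction n with
  | zero => exact Commute.one_right A
  | succ n ih => exact ih.mul_right ((Commute.refl A).sub_right ((Commute.one_right A).smul_right _))

lemma one_add_X_mul_eulerOp_opBinomSeries (A : Module.End ℂ U) :
    (1 + X) * eulerOp (opBinomSeries A) = X * C A * opBinomSeries A := by
  ext (_ | n) : 1
  · simp
  · have hrec : (n + 1) • coeff (n + 1) (opBinomSeries A) =
        (A - (n : ℂ) • 1) * coeff n (opBinomSeries A) := by
      simp only [opBinomSeries, coeff_mk, opDescPoch, succ_nsmul_inv_factorial_smul,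
        mul_smul_comm, ((commute_opDescPoch A n).sub_left ((Commute.one_left _).smul_left _)).eq]
    simp only [add_mul, one_mul, map_add, mul_assoc, coeff_succ_X_mul, coeff_eulerOp,
      coeff_C_mul, hrec]
    rw [sub_mul, smul_mul_assoc, one_mul, Nat.cast_smul_eq_nsmul, sub_add_cancel]

lemma eulerOp_opExpSeries (A : Module.End ℂ U) :
    eulerOp (opExpSeries A) = X * C A * opExpSeries A := by
  ext (_ | n) : 1
  · simp
  · simp only [mul_assoc, coeff_succ_X_mul, coeff_eulerOp, coeff_C_mul, opExpSeries, coeff_mk,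
      succ_nsmul_inv_factorial_smul, pow_succ', mul_smul_comm]

lemma opExpSeries_mul_C {A B : Module.End ℂ U} (h : B * A - A * B = A) :
    opExpSeries A * C B = C B * opExpSeries A - eulerOp (opExpSeries A) := by
  ext n : 1
  simp only [map_sub, coeff_mul_C, coeff_C_mul, coeff_eulerOp, opExpSeries, coeff_mk,
    smul_mul_assoc, mul_smul_comm, smul_comm n, ← smul_sub]
  rw [← mul_pow_sub_pow_mul_eq_nsmul h, sub_sub_cancel]

lemma one_add_X_mul_eulerOp_opExpSeries_mul_opBinomSeries {A B : Module.End ℂ U}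
    (h : B * A - A * B = A) :
    (1 + X) * eulerOp (opExpSeries A * opBinomSeries B) =
      X * C (A + B) * (opExpSeries A * opBinomSeries B) := by
  set E := opExpSeries A
  set F := opBinomSeries B
  have hE : eulerOp E = X * C A * E := eulerOp_opExpSeries A
  have hF : (1 + X) * eulerOp F = X * C B * F := one_add_X_mul_eulerOp_opBinomSeries B
  have hEB : E * C B = C B * E - X * C A * E := hE ▸ opExpSeries_mul_C h
  have hXE : Commute X E := (commute_X E).symm
  calc (1 + X) * eulerOp (E * F)
      = (1 + X) * (X * C A * E) * F + E * ((1 + X) * eulerOp F) := by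
        rw [eulerOp_mul, hE, mul_add, ← mul_assoc, ← mul_assoc (1 + X) E,
          ((Commute.one_left E).add_left hXE).eq, mul_assoc E]
    _ = (1 + X) * (X * C A * E) * F + X * (E * C B) * F := by
        rw [hF, ← mul_assoc E, ← mul_assoc E X, hXE.symm.eq, mul_assoc X E]
    _ = X * C (A + B) * (E * F) := by
        rw [hEB, map_add]
        noncomm_ring

end Operators

/-- Let `U` be a complex vector space and `L(-1)`, `L(0)` operators on `U` with
`[L(0), L(-1)] = L(-1)`.  Then, as formal power series in `x` with operator
coefficients, `e^{x L(-1)} (1+x)^{L(0)} = (1+x)^{L(-1)+L(0)}`. -/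
theorem exp_mul_binom_eq_binom_add {U : Type*} [AddCommGroup U] [Module ℂ U]
    (Lm1 L0 : Module.End ℂ U) (h : L0 * Lm1 - Lm1 * L0 = Lm1) :
    opExpSeries Lm1 * opBinomSeries L0 = opBinomSeries (Lm1 + L0) := by
  have : IsAddTorsionFree (Module.End ℂ U) := .of_isTorsionFree ℂ _
  refine eq_of_one_add_X_mul_eulerOp_eq (one_add_X_mul_eulerOp_opExpSeries_mul_opBinomSeries h)
    (one_add_X_mul_eulerOp_opBinomSeries _) ?_
  simp only [map_mul, ← coeff_zero_eq_constantCoeff_apply, opExpSeries, opBinomSeries, coeff_mk]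
  simp [opDescPoch]
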